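/- Let k ≥ 1 be a real number and let x = s·e^{iθ}, y = t·e^{iθ} be two points in the angular sector S_{π/k} with the same argument θ ∈ (0, π/k), where s, t > 0. Let f send r·e^{iφ} to r^k·e^{ikφ} (so f maps S_{π/k} into ℍ²). Then (k sin θ′ / sin kθ′) · j_{S_{π/k}}(x, y) ≤ j_{ℍ²}(f(x), f(y)) ≤ k · j_{S_{π/k}}(x, y), where θ′ = min{θ, π/k − θ}. -/

import Mathlib

/-!
Points on a ray have boundary distances proportional to their moduli: `s sin θ'` in the sector
(the nearer of its two boundary lines) and `s ^ k sin kθ` in `ℍ²`, where `sin kθ = sin kθ'`.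
So for `s ≤ t`, with `u = t / s`, `a = sin θ'` and `b = sin kθ'`, the two distances are
`log (1 + (u - 1) / a)` and `log (1 + (u ^ k - 1) / b)`.
The upper bound is the convexity of `x ↦ x ^ k` (`u` is a convex combination of `1` and
`1 + (u - 1) / a`) together with `a ≤ b`. For the lower bound,
`b log (b - 1 + u ^ k) - k a log (a - 1 + u)` is increasing in `u`: by Bernoulli's inequality its
derivative is nonnegative as soon as `k a (1 - b) ≤ b (1 - a)`, and this holds because
`y ↦ y / sin y - y` is decreasing on `(0, π/2]`.
-/

open Metric Real Filter Topology Set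

/-- The distance ratio metric of a domain `G`:
`j_G(x,y) = log(1 + |x-y| / min(d(x,∂G), d(y,∂G)))`. -/
noncomputable def jdist {E : Type*} [PseudoMetricSpace E] (G : Set E) (x y : E) : ℝ :=
  Real.log (1 + dist x y /
    min (Metric.infDist x (frontier G)) (Metric.infDist y (frontier G)))

open Complex (I)

lemma sin_le_sin_of_le_of_add_le_pi {a b : ℝ} (ha : 0 ≤ a) (hab : a ≤ b) (hπ : a + b ≤ π) :
    sin a ≤ sin b := by
  have h := Real.sin_sub_sin b a
  have h₁ : 0 ≤ sin ((b - a) / 2) := sin_nonneg_of_nonneg_of_le_pi (by linarith) (by linarith)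
  have h₂ : 0 ≤ cos ((b + a) / 2) := cos_nonneg_of_mem_Icc ⟨by linarith, by linarith⟩
  nlinarith [mul_nonneg h₁ h₂]

lemma sin_min {a b : ℝ} (ha : 0 ≤ a) (hb : 0 ≤ b) (hab : a + b ≤ π) :
    sin (min a b) = min (sin a) (sin b) := by
  rcases le_total a b with h | h
  · rw [min_eq_left h, min_eq_left (sin_le_sin_of_le_of_add_le_pi ha h hab)]
  · rw [min_eq_right h, min_eq_right (sin_le_sin_of_le_of_add_le_pi hb h (by linarith))]

lemma antitoneOn_div_sin_sub_self : AntitoneOn (fun y => y / sin y - y) (Ioc 0 (π / 2)) := by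
  have hsin : ∀ y ∈ Ioc 0 (π / 2), 0 < sin y := fun y hy =>
    sin_pos_of_pos_of_lt_pi hy.1 (by linarith [hy.2, pi_pos])
  have hderiv : ∀ y ∈ Ioc 0 (π / 2), HasDerivAt (fun y => y / sin y - y)
      ((1 * sin y - y * cos y) / sin y ^ 2 - 1) y := fun y hy =>
    ((hasDerivAt_id y).div (hasDerivAt_sin y) (hsin y hy).ne').sub (hasDerivAt_id y)
  refine antitoneOn_of_hasDerivWithinAt_nonpos (convex_Ioc 0 (π / 2))
    (fun y hy => (hderiv y hy).continuousAt.continuousWithinAt)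
    (fun y hy => (hderiv y (interior_subset hy)).hasDerivWithinAt) fun y hy => ?_
  rw [interior_Ioc] at hy
  have hs := hsin y ⟨hy.1, hy.2.le⟩
  have hc : 0 ≤ cos y := cos_nonneg_of_mem_Icc ⟨by linarith [hy.1, pi_pos], hy.2.le⟩
  -- `sin y (1 - sin y) = sin y cos² y / (1 + sin y) ≤ y cos y`, as `sin y cos y ≤ sin y ≤ y`
  have key : sin y - y * cos y ≤ sin y ^ 2 := by
    nlinarith [sin_le hy.1.le, sin_sq_add_cos_sq y, cos_le_one y, mul_nonneg hs.le hc]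
  rw [sub_nonpos, div_le_one (by positivity)]
  linarith

lemma mul_sin_mul_one_sub_sin_mul_le {k x : ℝ} (hx : 0 < x) (hk : 1 ≤ k) (hkx : k * x ≤ π / 2) :
    k * sin x * (1 - sin (k * x)) ≤ sin (k * x) * (1 - sin x) := by
  have hxk : x ≤ k * x := by nlinarith
  have h := antitoneOn_div_sin_sub_self ⟨hx, hxk.trans hkx⟩ ⟨hx.trans_le hxk, hkx⟩ hxk
  have ha : 0 < sin x := sin_pos_of_pos_of_lt_pi hx (by linarith [pi_pos])
  have hb : 0 < sin (k * x) := sin_pos_of_pos_of_lt_pi (by linarith) (by linarith [pi_pos])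
  simp only at h
  rw [div_sub' hb.ne', div_sub' ha.ne', div_le_div_iff₀ hb ha] at h
  nlinarith [mul_pos ha hb]

lemma sin_mul_min_sub {k θ : ℝ} (hk : k ≠ 0) : sin (k * min θ (π / k - θ)) = sin (k * θ) := by
  rcases min_choice θ (π / k - θ) with h | h <;> rw [h]
  rw [mul_sub, mul_div_cancel₀ _ hk, sin_pi_sub]

lemma rpow_sub_one_le_mul_rpow_sub_one_mul {u k : ℝ} (hu : 0 < u) (hk : 1 ≤ k) :
    u ^ k - 1 ≤ k * u ^ (k - 1) * (u - 1) := by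
  have h := one_add_mul_self_le_rpow_one_add (s := u⁻¹ - 1) (by linarith [inv_pos.2 hu]) hk
  rw [add_sub_cancel, inv_rpow hu.le] at h
  have hw := rpow_pos_of_pos hu k
  have h' := mul_le_mul_of_nonneg_right h hw.le
  rw [inv_mul_cancel₀ hw.ne'] at h'
  rw [rpow_sub_one hu.ne']
  have e : k * (u ^ k / u) * (u - 1) = u ^ k - (1 + k * (u⁻¹ - 1)) * u ^ k := by
    field_simp
    ring
  linarith

lemma mul_sub_one_add_rpow_le {a b k u : ℝ} (ha : 0 ≤ a) (hb : b ≤ 1) (hk : 1 ≤ k) (hu : 1 ≤ u)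
    (hab : k * a * (1 - b) ≤ b * (1 - a)) :
    a * (b - 1 + u ^ k) ≤ b * u ^ (k - 1) * (a - 1 + u) := by
  have hu₀ : 0 < u := by linarith
  have hpow : u ^ k = u ^ (k - 1) * u := by
    rw [rpow_sub_one hu₀.ne', div_mul_cancel₀ _ hu₀.ne']
  have hw : 0 ≤ u ^ (k - 1) * (u - 1) := mul_nonneg (by positivity) (by linarith)
  have h₁ : a * (1 - b) * (u ^ k - 1) ≤ a * (1 - b) * (k * u ^ (k - 1) * (u - 1)) :=
    mul_le_mul_of_nonneg_left (rpow_sub_one_le_mul_rpow_sub_one_mul hu₀ hk)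
      (mul_nonneg ha (by linarith))
  have h₂ : k * a * (1 - b) * (u ^ (k - 1) * (u - 1)) ≤ b * (1 - a) * (u ^ (k - 1) * (u - 1)) :=
    mul_le_mul_of_nonneg_right hab hw
  rw [hpow] at h₁ ⊢
  nlinarith

lemma mul_log_one_add_le_log_one_add_rpow {a b k u : ℝ} (ha : 0 < a) (hb : 0 < b) (hb1 : b ≤ 1)
    (hk : 1 ≤ k) (hu : 1 ≤ u) (hab : k * a * (1 - b) ≤ b * (1 - a)) :
    k * a / b * log (1 + (u - 1) / a) ≤ log (1 + (u ^ k - 1) / b) := by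
  have hden : ∀ v, 1 ≤ v → 0 < a - 1 + v ∧ 0 < b - 1 + v ^ k := fun v hv =>
    ⟨by linarith, by linarith [one_le_rpow hv (by linarith : 0 ≤ k)]⟩
  set F : ℝ → ℝ := fun v => b * log (b - 1 + v ^ k) - k * a * log (a - 1 + v)
  have hderiv : ∀ v, 1 ≤ v →
      HasDerivAt F (b * (k * v ^ (k - 1) / (b - 1 + v ^ k)) - k * a * (1 / (a - 1 + v))) v :=
    fun v hv =>
      ((((hasDerivAt_rpow_const (Or.inr hk)).const_add (b - 1)).log
        (hden v hv).2.ne').const_mul b).sub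
      ((((hasDerivAt_id' v).const_add (a - 1)).log (hden v hv).1.ne').const_mul (k * a))
  have hmono : MonotoneOn F (Ici 1) := by
    refine monotoneOn_of_hasDerivWithinAt_nonneg (convex_Ici 1)
      (fun v hv => (hderiv v hv).continuousAt.continuousWithinAt)
      (fun v hv => (hderiv v (interior_subset hv)).hasDerivWithinAt) fun v hv => ?_
    rw [interior_Ici] at hv
    obtain ⟨h₁, h₂⟩ := hden v hv.le
    rw [sub_nonneg, mul_one_div, ← mul_div_assoc, div_le_div_iff₀ h₁ h₂]
    nlinarith [mul_sub_one_add_rpow_le ha.le hb1 hk hv.le hab]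
  have hF := hmono self_mem_Ici hu hu
  simp only [F, one_rpow, sub_add_cancel] at hF
  have hlog : ∀ c w, 0 < c → 0 < c - 1 + w → log (1 + (w - 1) / c) = log (c - 1 + w) - log c :=
    fun c w hc hw => by
      rw [← log_div hw.ne' hc.ne']
      congr 1
      field_simp
      ring
  rw [hlog a u ha (hden u hu).1, hlog b (u ^ k) hb (hden u hu).2, div_mul_eq_mul_div,
    div_le_iff₀ hb]
  linarith

lemma log_one_add_rpow_le_mul_log_one_add {a b k u : ℝ} (ha : 0 < a) (ha1 : a ≤ 1) (hab : a ≤ b)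
    (hk : 1 ≤ k) (hu : 1 ≤ u) :
    log (1 + (u ^ k - 1) / b) ≤ k * log (1 + (u - 1) / a) := by
  set c := (u - 1) / a
  have hc : 0 ≤ c := div_nonneg (by linarith) ha.le
  have hconv : u ^ k ≤ (1 - a) + a * (1 + c) ^ k := by
    have h := (convexOn_rpow hk).2 (mem_Ici.2 zero_le_one)
      (mem_Ici.2 (by linarith : (0 : ℝ) ≤ 1 + c)) (by linarith : 0 ≤ 1 - a) ha.le (by ring)
    have hu_eq : 1 - a + a * (1 + c) = u := by
      rw [mul_add, mul_div_cancel₀ _ ha.ne']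
      ring
    simpa only [smul_eq_mul, one_rpow, mul_one, hu_eq] using h
  have hu' : 0 ≤ u ^ k - 1 := by linarith [one_le_rpow hu (by linarith : 0 ≤ k)]
  have hle : (u ^ k - 1) / b ≤ (1 + c) ^ k - 1 := by
    calc (u ^ k - 1) / b ≤ (u ^ k - 1) / a := div_le_div_of_nonneg_left hu' ha hab
      _ ≤ (1 + c) ^ k - 1 := by rw [div_le_iff₀ ha]; nlinarith
  calc log (1 + (u ^ k - 1) / b) ≤ log ((1 + c) ^ k) :=
        log_le_log (by linarith [div_nonneg hu' (ha.trans_le hab).le]) (by linarith)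
    _ = k * log (1 + c) := log_rpow (by linarith) k

lemma infDist_union {α : Type*} [PseudoMetricSpace α] {x : α} {s t : Set α} (hs : s.Nonempty)
    (ht : t.Nonempty) : infDist x (s ∪ t) = min (infDist x s) (infDist x t) := by
  simp only [infDist, infEDist_union,
    ENNReal.toReal_min (infEDist_ne_top hs) (infEDist_ne_top ht)]

lemma infDist_frontier_eq_infDist_compl {E : Type*} [NormedAddCommGroup E] [NormedSpace ℝ E]
    [FiniteDimensional ℝ E] {s : Set E} {x : E} (hs : IsOpen s) (hx : x ∈ s) (hs' : s ≠ univ) :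
    infDist x (frontier s) = infDist x sᶜ := by
  obtain ⟨y, hy, hxy⟩ := exists_mem_frontier_infDist_compl_eq_dist hx hs'
  refine le_antisymm (hxy ▸ infDist_le_dist_of_mem hy) (infDist_le_infDist_of_subset ?_ ⟨y, hy⟩)
  rw [hs.frontier_eq]
  exact fun z hz => hz.2

lemma jdist_comm {E : Type*} [PseudoMetricSpace E] (G : Set E) (x y : E) :
    jdist G x y = jdist G y x := by
  rw [jdist, jdist, dist_comm, min_comm]

lemma infDist_compl_halfPlane {c x : ℂ} (hc : ‖c‖ = 1) (hx : 0 ≤ (x * c).im) :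
    infDist x {z : ℂ | 0 < (z * c).im}ᶜ = (x * c).im := by
  have hc₀ : c ≠ 0 := norm_ne_zero_iff.1 (by rw [hc]; exact one_ne_zero)
  have hdist : ∀ z, dist x z = ‖(x * c - z * c)‖ := fun z => by
    rw [dist_eq_norm, ← sub_mul, norm_mul, hc, mul_one]
  -- the foot of the perpendicular from `x` to the boundary line
  set z₀ : ℂ := ((x * c).re : ℂ) * c⁻¹
  have hz₀c : z₀ * c = (x * c).re := by simp [z₀, hc₀]
  have hz₀ : z₀ ∈ {z : ℂ | 0 < (z * c).im}ᶜ := fun h => by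
    simp only [mem_ofPred_eq, hz₀c, Complex.ofReal_im, lt_self_iff_false] at h
  refine le_antisymm ?_ ((le_infDist ⟨z₀, hz₀⟩).2 fun z hz => ?_)
  · calc infDist x _ ≤ dist x z₀ := infDist_le_dist_of_mem hz₀
      _ = (x * c).im := by
        have hperp : x * c - z₀ * c = (x * c).im * I := by
          rw [hz₀c]
          apply Complex.ext <;> simp
        rw [hdist, hperp, norm_mul, Complex.norm_I, mul_one, Complex.norm_real,
          Real.norm_of_nonneg hx]
  · simp only [mem_compl_iff, mem_ofPred_eq, not_lt] at hz
    rw [hdist]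
    linarith [Complex.im_le_norm (x * c - z * c), Complex.sub_im (x * c) (z * c)]

lemma infDist_compl_upperHalfPlane {x : ℂ} (hx : 0 ≤ x.im) :
    infDist x {z : ℂ | 0 < z.im}ᶜ = x.im := by
  simpa using infDist_compl_halfPlane (c := 1) (by simp) (by simpa using hx)

lemma im_ofReal_mul_exp_mul_I (r α : ℝ) : ((r : ℂ) * Complex.exp (α * I)).im = r * sin α := by
  rw [Complex.im_ofReal_mul, Complex.exp_ofReal_mul_I_im]

lemma im_ofReal_mul_exp_mul_I_mul_exp (r α β : ℝ) :
    ((r : ℂ) * Complex.exp (α * I) * Complex.exp (β * I)).im = r * sin (α + β) := by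
  rw [mul_assoc, ← Complex.exp_add, ← add_mul, ← Complex.ofReal_add, im_ofReal_mul_exp_mul_I]

lemma im_mul_exp_mul_I (z : ℂ) (β : ℝ) :
    (z * Complex.exp (β * I)).im = ‖z‖ * sin (z.arg + β) := by
  conv_lhs => rw [← Complex.norm_mul_exp_arg_mul_I z]
  exact im_ofReal_mul_exp_mul_I_mul_exp _ _ _

lemma dist_ofReal_mul_exp_mul_I (s t α : ℝ) :
    dist ((s : ℂ) * Complex.exp (α * I)) ((t : ℂ) * Complex.exp (α * I)) = dist s t := by
  rw [dist_eq_norm, ← sub_mul, norm_mul, Complex.norm_exp_ofReal_mul_I, mul_one,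
    ← Complex.ofReal_sub, Complex.norm_real, dist_eq_norm]

lemma infDist_frontier_upperHalfPlane {r α : ℝ} (hr : 0 < r) (hα : α ∈ Ioo 0 π) :
    infDist ((r : ℂ) * Complex.exp (α * I)) (frontier {z : ℂ | 0 < z.im}) = r * sin α := by
  have him : 0 < ((r : ℂ) * Complex.exp (α * I)).im := by
    rw [im_ofReal_mul_exp_mul_I]
    exact mul_pos hr (sin_pos_of_pos_of_lt_pi hα.1 hα.2)
  rw [infDist_frontier_eq_infDist_compl (isOpen_lt continuous_const Complex.continuous_im) him
    (fun h => by simpa using h.ge (mem_univ (0 : ℂ))), infDist_compl_upperHalfPlane him.le,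
    im_ofReal_mul_exp_mul_I]

lemma sector_eq_inter {φ : ℝ} (hφ : 0 < φ) (hφπ : φ ≤ π) :
    {z : ℂ | 0 < z.arg ∧ z.arg < φ} =
      {z : ℂ | 0 < z.im} ∩ {z : ℂ | 0 < (z * Complex.exp ((π - φ : ℝ) * I)).im} := by
  ext z
  simp only [mem_ofPred_eq, mem_inter_iff, im_mul_exp_mul_I,
    show z.arg + (π - φ) = π - (φ - z.arg) by ring, sin_pi_sub]
  constructor
  · rintro ⟨h₀, hφ'⟩
    have hz : z ≠ 0 := by rintro rfl; simp at h₀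
    have hn := norm_pos_iff.2 hz
    have hsin := sin_pos_of_pos_of_lt_pi h₀ (hφ'.trans_le hφπ)
    rw [Complex.sin_arg] at hsin
    exact ⟨(div_pos_iff_of_pos_right hn).1 hsin,
      mul_pos hn (sin_pos_of_pos_of_lt_pi (by linarith) (by linarith))⟩
  · rintro ⟨h₁, h₂⟩
    have hz : z ≠ 0 := by rintro rfl; simp at h₁
    have hn := norm_pos_iff.2 hz
    have hsin : 0 < sin z.arg := by rw [Complex.sin_arg]; positivity
    constructor
    · by_contra! h
      linarith [sin_nonpos_of_nonpos_of_neg_pi_le h (Complex.neg_pi_lt_arg z).le]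
    · by_contra! h
      have := sin_nonpos_of_nonpos_of_neg_pi_le (sub_nonpos.2 h)
        (by linarith [Complex.arg_le_pi z])
      nlinarith

lemma infDist_frontier_sector {φ θ s : ℝ} (hφπ : φ ≤ π) (hθ : θ ∈ Ioo 0 φ) (hs : 0 < s) :
    infDist ((s : ℂ) * Complex.exp (θ * I)) (frontier {z : ℂ | 0 < z.arg ∧ z.arg < φ}) =
      s * sin (min θ (φ - θ)) := by
  obtain ⟨hθ₀, hθφ⟩ := hθ
  set c := Complex.exp ((π - φ : ℝ) * I)
  have him₁ := im_ofReal_mul_exp_mul_I s θ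
  have him₂ : ((s : ℂ) * Complex.exp (θ * I) * c).im = s * sin (φ - θ) := by
    rw [im_ofReal_mul_exp_mul_I_mul_exp, show θ + (π - φ) = π - (φ - θ) by ring, sin_pi_sub]
  have hs₁ : 0 < s * sin θ := mul_pos hs (sin_pos_of_pos_of_lt_pi hθ₀ (by linarith))
  have hs₂ : 0 < s * sin (φ - θ) :=
    mul_pos hs (sin_pos_of_pos_of_lt_pi (by linarith) (by linarith))
  have hopen : IsOpen ({z : ℂ | 0 < z.im} ∩ {z : ℂ | 0 < (z * c).im}) :=
    (isOpen_lt continuous_const Complex.continuous_im).inter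
      (isOpen_lt continuous_const (Complex.continuous_im.comp (continuous_mul_const c)))
  have hzero : ∀ w : ℂ, ¬ 0 < (0 * w).im := by simp
  rw [sector_eq_inter (hθ₀.trans hθφ) hφπ, infDist_frontier_eq_infDist_compl hopen
      ⟨by rw [mem_ofPred_eq, him₁]; exact hs₁, by rw [mem_ofPred_eq, him₂]; exact hs₂⟩
      (fun h => hzero 1 (by simpa using (h.ge (mem_univ 0)).1)),
    compl_inter, infDist_union ⟨0, by simp⟩ ⟨0, hzero c⟩,
    infDist_compl_upperHalfPlane (him₁ ▸ hs₁.le),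
    infDist_compl_halfPlane (Complex.norm_exp_ofReal_mul_I _) (him₂ ▸ hs₂.le), him₁, him₂,
    sin_min hθ₀.le (by linarith) (by linarith), mul_min_of_nonneg _ _ hs.le]

lemma jdist_ofReal_mul_exp_mul_I {G : Set ℂ} {α δ s t : ℝ} (hδ : 0 < δ)
    (hG : ∀ r : ℝ, 0 < r → infDist ((r : ℂ) * Complex.exp (α * I)) (frontier G) = r * δ)
    (hs : 0 < s) (hst : s ≤ t) :
    jdist G ((s : ℂ) * Complex.exp (α * I)) ((t : ℂ) * Complex.exp (α * I)) =
      log (1 + (t / s - 1) / δ) := by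
  rw [jdist, hG s hs, hG t (hs.trans_le hst), min_eq_left (by gcongr),
    dist_ofReal_mul_exp_mul_I, dist_comm, Real.dist_eq, abs_of_nonneg (by linarith)]
  congr 2
  field_simp

/-- For the power map `r e^{iφ} ↦ r^k e^{ikφ}` from the sector `S_{π/k}` into
the upper half plane and two points `x = s e^{iθ}`, `y = t e^{iθ}` with the
same argument,
`(k sin θ'/ sin kθ') j_{S_{π/k}}(x,y) ≤ j_{ℍ²}(f x, f y) ≤ k j_{S_{π/k}}(x,y)`
where `θ' = min(θ, π/k - θ)`. -/
theorem power_map_jdist_same_argument (k : ℝ) (hk : 1 ≤ k) (θ s t : ℝ)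
    (hθ : θ ∈ Set.Ioo 0 (π / k)) (hs : 0 < s) (ht : 0 < t) :
    (k * Real.sin (min θ (π / k - θ)) / Real.sin (k * min θ (π / k - θ))) *
        jdist {z : ℂ | 0 < Complex.arg z ∧ Complex.arg z < π / k}
          ((s : ℂ) * Complex.exp (θ * Complex.I)) ((t : ℂ) * Complex.exp (θ * Complex.I)) ≤
      jdist {z : ℂ | 0 < z.im}
        (((s ^ k : ℝ) : ℂ) * Complex.exp ((k * θ : ℝ) * Complex.I))
        (((t ^ k : ℝ) : ℂ) * Complex.exp ((k * θ : ℝ) * Complex.I)) ∧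
    jdist {z : ℂ | 0 < z.im}
        (((s ^ k : ℝ) : ℂ) * Complex.exp ((k * θ : ℝ) * Complex.I))
        (((t ^ k : ℝ) : ℂ) * Complex.exp ((k * θ : ℝ) * Complex.I)) ≤
      k * jdist {z : ℂ | 0 < Complex.arg z ∧ Complex.arg z < π / k}
        ((s : ℂ) * Complex.exp (θ * Complex.I)) ((t : ℂ) * Complex.exp (θ * Complex.I)) := by
  wlog hst : s ≤ t generalizing s t
  · obtain ⟨h₁, h₂⟩ := this t s ht hs (le_of_not_ge hst)
    rw [jdist_comm _ ((t : ℂ) * _), jdist_comm _ (((t ^ k : ℝ) : ℂ) * _)] at h₁ h₂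
    exact ⟨h₁, h₂⟩
  have hk₀ : 0 < k := by linarith
  have hkθ : k * θ ∈ Ioo 0 π := ⟨mul_pos hk₀ hθ.1, by rw [← lt_div_iff₀' hk₀]; exact hθ.2⟩
  set θ' := min θ (π / k - θ)
  have hθ' : 0 < θ' := lt_min hθ.1 (by linarith [hθ.2])
  have hkθ' : k * θ' ≤ π / 2 := by
    have : 2 * θ' ≤ π / k := by linarith [min_le_left θ (π / k - θ), min_le_right θ (π / k - θ)]
    rw [le_div_iff₀ hk₀] at this
    linarith
  have ha : 0 < sin θ' := sin_pos_of_pos_of_lt_pi hθ' (by nlinarith [pi_pos])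
  have hab : sin θ' ≤ sin (k * θ') :=
    sin_le_sin_of_le_of_le_pi_div_two (by linarith [pi_pos]) hkθ' (by nlinarith)
  have hu : 1 ≤ t / s := (one_le_div hs).2 hst
  rw [jdist_ofReal_mul_exp_mul_I ha
      (fun r hr => infDist_frontier_sector (div_le_self pi_pos.le hk) hθ hr) hs hst,
    jdist_ofReal_mul_exp_mul_I (sin_pos_of_pos_of_lt_pi hkθ.1 hkθ.2)
      (fun r hr => infDist_frontier_upperHalfPlane hr hkθ) (rpow_pos_of_pos hs k)
      (rpow_le_rpow hs.le hst hk₀.le),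
    ← div_rpow ht.le hs.le, ← sin_mul_min_sub (θ := θ) hk₀.ne']
  exact ⟨mul_log_one_add_le_log_one_add_rpow ha (ha.trans_le hab) (sin_le_one _) hk hu
      (mul_sin_mul_one_sub_sin_mul_le hθ' hk hkθ'),
    log_one_add_rpow_le_mul_log_one_add ha (sin_le_one _) hab hk hu⟩
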